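/- Let p ≥ 3 and let Z = (Z_1, …, Z_p) be a standard Gaussian vector in ℝ^p. Then for all i ≠ j, E[Z_i Z_j · 1{Z_1 Z_2 ⋯ Z_p > 0}] = 0 and E[Z_i Z_j · 1{Z_1 Z_2 ⋯ Z_p < 0}] = 0; consequently E[Z_i Z_j | σ(sign(Z_1 ⋯ Z_p))] = 0 almost surely. -/

import Mathlib

open MeasureTheory ProbabilityTheory

/-
Flipping the sign of one coordinate preserves the product of centred Gaussians and maps
`{∏ Z_k ∈ t}` to `{∏ Z_k ∈ -t}`. As `p ≥ 3`, some coordinate `k` differs from `i` and `j`: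
flipping `Z_k` shows that `∫_{∏ Z ∈ t} Z_i Z_j = ∫_{∏ Z ∈ -t} Z_i Z_j`, while flipping `Z_i`
shows that the same integral equals `-∫_{∏ Z ∈ -t} Z_i Z_j`. Hence `Z_i Z_j` integrates to zero
over every event determined by `∏ Z_k`, in particular over every event in `σ(sign ∏ Z_k)`.
-/

instance ProbabilityTheory.isNegInvariant_gaussianReal_zero (v : NNReal) :
    (gaussianReal 0 v).IsNegInvariant :=
  ⟨(gaussianReal_map_neg (μ := 0) (v := v)).trans (by rw [neg_zero])⟩

theorem Real.measurable_sign : Measurable Real.sign :=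
  Measurable.ite measurableSet_Iio measurable_const
    (Measurable.ite measurableSet_Ioi measurable_const measurable_const)

namespace MeasureTheory

theorem condExp_ae_eq_zero_of_forall_setIntegral_eq_zero {α E : Type*} {m m₀ : MeasurableSpace α}
    {μ : Measure α} [NormedAddCommGroup E] [NormedSpace ℝ E] [CompleteSpace E] {f : α → E}
    (hf : ∀ s, MeasurableSet[m] s → ∫ x in s, f x ∂μ = 0) : μ[f | m] =ᵐ[μ] 0 := by
  by_cases hm : m ≤ m₀
  swap; · rw [condExp_of_not_le hm]
  by_cases hμm : SigmaFinite (μ.trim hm)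
  swap; · rw [condExp_of_not_sigmaFinite hm hμm]
  by_cases hfi : Integrable f μ
  swap; · rw [condExp_of_not_integrable hfi]
  exact (ae_eq_condExp_of_forall_setIntegral_eq hm hfi (fun _ _ _ => integrableOn_zero)
    (fun s hs _ => by rw [hf s hs]; simp) aestronglyMeasurable_zero).symm

end MeasureTheory

section NegCoord

variable {ι : Type*} [DecidableEq ι]

noncomputable def negCoord (l : ι) : (ι → ℝ) ≃ᵐ (ι → ℝ) :=
  MeasurableEquiv.piCongrRight fun k => if k = l then MeasurableEquiv.neg ℝ else .refl ℝ

theorem negCoord_apply (l : ι) (x : ι → ℝ) (k : ι) :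
    negCoord l x k = if k = l then -x k else x k := by
  by_cases hk : k = l <;>
    simp [negCoord, MeasurableEquiv.piCongrRight, Equiv.piCongrRight, hk]

theorem prod_negCoord [Fintype ι] (l : ι) (x : ι → ℝ) : ∏ k, negCoord l x k = -∏ k, x k := by
  calc ∏ k, negCoord l x k = -x l * ∏ k ∈ Finset.univ.erase l, x k := by
        rw [← Finset.mul_prod_erase _ _ (Finset.mem_univ l), negCoord_apply, if_pos rfl]
        congr 1
        refine Finset.prod_congr rfl fun k hk => ?_
        rw [negCoord_apply, if_neg (Finset.ne_of_mem_erase hk)]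
    _ = -∏ k, x k := by rw [neg_mul, Finset.mul_prod_erase _ _ (Finset.mem_univ l)]

theorem measurePreserving_negCoord [Fintype ι] (μ : ι → Measure ℝ) [∀ k, SigmaFinite (μ k)]
    [∀ k, (μ k).IsNegInvariant] (l : ι) :
    MeasurePreserving (negCoord l) (Measure.pi μ) (Measure.pi μ) := by
  convert measurePreserving_pi μ μ (f := fun k t => if k = l then -t else t) fun k => ?_
  · exact negCoord_apply _ _ _
  · split_ifs
    · exact Measure.measurePreserving_neg _
    · exact .id _

theorem setIntegral_comp_negCoord [Fintype ι] (μ : ι → Measure ℝ) [∀ k, SigmaFinite (μ k)]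
    [∀ k, (μ k).IsNegInvariant] (l : ι) (g : (ι → ℝ) → ℝ) (t : Set ℝ) :
    ∫ x in {x | ∏ k, x k ∈ -t}, g (negCoord l x) ∂Measure.pi μ =
      ∫ x in {x | ∏ k, x k ∈ t}, g x ∂Measure.pi μ := by
  have hpre : negCoord l ⁻¹' {x | ∏ k, x k ∈ t} = {x | ∏ k, x k ∈ -t} := by
    ext x
    simp [prod_negCoord]
  rw [← hpre]
  exact (measurePreserving_negCoord μ l).setIntegral_preimage_emb
    (negCoord l).measurableEmbedding g _

theorem setIntegral_prod_mem_mul_eq_zero [Fintype ι] (μ : ι → Measure ℝ)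
    [∀ k, SigmaFinite (μ k)] [∀ k, (μ k).IsNegInvariant] {i j k : ι} (hij : i ≠ j)
    (hki : k ≠ i) (hkj : k ≠ j) (t : Set ℝ) :
    ∫ x in {x | ∏ l, x l ∈ t}, x i * x j ∂Measure.pi μ = 0 := by
  have h_even : ∫ x in {x | ∏ l, x l ∈ -t}, x i * x j ∂Measure.pi μ =
      ∫ x in {x | ∏ l, x l ∈ t}, x i * x j ∂Measure.pi μ := by
    rw [← setIntegral_comp_negCoord μ k (fun y => y i * y j) t]
    simp only [negCoord_apply, hki.symm, hkj.symm, if_false]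
  have h_odd : ∫ x in {x | ∏ l, x l ∈ -t}, -(x i * x j) ∂Measure.pi μ =
      ∫ x in {x | ∏ l, x l ∈ t}, x i * x j ∂Measure.pi μ := by
    rw [← setIntegral_comp_negCoord μ i (fun y => y i * y j) t]
    simp only [negCoord_apply, hij.symm, if_true, if_false, neg_mul]
  rw [integral_neg, h_even] at h_odd
  linarith

theorem setIntegral_prod_mem_mul_eq_zero_of_map_eq [Fintype ι] {Ω : Type*} [MeasurableSpace Ω]
    {P : Measure Ω} {Z : Ω → ι → ℝ} (μ : ι → Measure ℝ) [∀ k, SigmaFinite (μ k)]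
    [∀ k, (μ k).IsNegInvariant] (hZ : Measurable Z) (hP : P.map Z = Measure.pi μ)
    {i j k : ι} (hij : i ≠ j) (hki : k ≠ i) (hkj : k ≠ j) {t : Set ℝ} (ht : MeasurableSet t) :
    ∫ ω in {ω | ∏ l, Z ω l ∈ t}, Z ω i * Z ω j ∂P = 0 := by
  have hs : MeasurableSet {x : ι → ℝ | ∏ l, x l ∈ t} := by measurability
  rw [← setIntegral_prod_mem_mul_eq_zero μ hij hki hkj t, ← hP,
    setIntegral_map hs (by fun_prop) hZ.aemeasurable]
  rfl

end NegCoord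

theorem parity_offdiagonal_vanishes_general {Ω : Type*} [MeasurableSpace Ω]
    (P : Measure Ω) {p : ℕ} (hp : 3 ≤ p)
    (Z : Ω → Fin p → ℝ) (hZmeas : Measurable Z)
    (hZ : Measure.map Z P = Measure.pi fun _ : Fin p => gaussianReal 0 1) :
    (∀ i j : Fin p, i ≠ j →
      (∫ ω in {ω | 0 < ∏ k, Z ω k}, Z ω i * Z ω j ∂P) = 0 ∧
      (∫ ω in {ω | ∏ k, Z ω k < 0}, Z ω i * Z ω j ∂P) = 0) ∧
    (∀ i j : Fin p, i ≠ j →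
      P[(fun ω => Z ω i * Z ω j) |
          MeasurableSpace.comap (fun ω => Real.sign (∏ k, Z ω k)) inferInstance]
        =ᵐ[P] 0) := by
  have key {i j : Fin p} (hij : i ≠ j) {t : Set ℝ} (ht : MeasurableSet t) :
      ∫ ω in {ω | ∏ l, Z ω l ∈ t}, Z ω i * Z ω j ∂P = 0 := by
    obtain ⟨k, hki, hkj⟩ := Fin.exists_ne_and_ne_of_two_lt i j hp
    exact setIntegral_prod_mem_mul_eq_zero_of_map_eq _ hZmeas hZ hij hki hkj ht
  refine ⟨fun i j hij => ⟨key hij measurableSet_Ioi, key hij measurableSet_Iio⟩,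
    fun i j hij => condExp_ae_eq_zero_of_forall_setIntegral_eq_zero ?_⟩
  rintro _ ⟨t, ht, rfl⟩
  exact key hij (Real.measurable_sign ht)

/-- For the `p`-sparse parity with `p ≥ 3`: for `i ≠ j` the correlations
`E[Z_i Z_j · 1{∏ Z_k > 0}]` and `E[Z_i Z_j · 1{∏ Z_k < 0}]` vanish, and hence
`E[Z_i Z_j | σ(sign(∏ Z_k))] = 0` almost surely. -/
theorem parity_offdiagonal_vanishes {Ω : Type*} [MeasurableSpace Ω]
    (P : Measure Ω) [IsProbabilityMeasure P] {p : ℕ} (hp : 3 ≤ p)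
    (Z : Ω → Fin p → ℝ) (hZmeas : Measurable Z)
    (hZ : Measure.map Z P = Measure.pi fun _ : Fin p => gaussianReal 0 1) :
    (∀ i j : Fin p, i ≠ j →
      (∫ ω in {ω | 0 < ∏ k, Z ω k}, Z ω i * Z ω j ∂P) = 0 ∧
      (∫ ω in {ω | ∏ k, Z ω k < 0}, Z ω i * Z ω j ∂P) = 0) ∧
    (∀ i j : Fin p, i ≠ j →
      P[(fun ω => Z ω i * Z ω j) |
          MeasurableSpace.comap (fun ω => Real.sign (∏ k, Z ω k)) inferInstance]
        =ᵐ[P] 0) :=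
  parity_offdiagonal_vanishes_general P hp Z hZmeas hZ
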